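/- For all integers 0 ≤ j ≤ k and every unipotent upper-triangular n×n matrix g over F: Ψ^j(g) · Ψ^k(g) = Σ_{m=0}^{j} q^{(j−m)(j−m−1)/2} · [k+m choose k+m−j]_q · [j choose m]_q · Ψ^{k+m}(g), where the Gaussian binomials are evaluated at q = |F|. -/

import Mathlib

open Finset Polynomial

variable {F : Type*} [Field F] [Fintype F] [DecidableEq F]

/-- The strictly lower-triangular part of a matrix. -/
def lowerPart {n : ℕ} (x : Matrix (Fin n) (Fin n) F) : Matrix (Fin n) (Fin n) F :=
  Matrix.of fun i j => if j < i then x i j else 0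

open Classical in
/-- `Ψ_K(g)`: the sum of `θ(tr((g − 1) v))` over all strictly lower-triangular `v`
whose nonzero entries lie in columns indexed by `K` and with `lower(g v) = v`. -/
noncomputable def Psi {n : ℕ} (θ : F → ℂ) (K : Finset (Fin n))
    (g : Matrix (Fin n) (Fin n) F) : ℂ :=
  ∑ v ∈ univ.filter (fun v : Matrix (Fin n) (Fin n) F =>
      (∀ i j, ¬ j < i → v i j = 0) ∧ (∀ i j, v i j ≠ 0 → j ∈ K) ∧ lowerPart (g * v) = v),
    θ (Matrix.trace ((g - 1) * v))

/-- `Ψ^k(g) = ∑_{K ⊆ N, |K| = k} Ψ_K(g)`. -/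
noncomputable def Psik {n : ℕ} (θ : F → ℂ) (k : ℕ) (g : Matrix (Fin n) (Fin n) F) : ℂ :=
  ∑ K ∈ (univ : Finset (Fin n)).powersetCard k, Psi θ K g

/-- The Gaussian binomial coefficient `[n choose k]_q` as a polynomial in `q`. -/
noncomputable def gaussBinom : ℕ → ℕ → Polynomial ℤ
  | _, 0 => 1
  | 0, _ + 1 => 0
  | n + 1, k + 1 => gaussBinom n k + X ^ (k + 1) * gaussBinom n (k + 1)

/-!
With `u = g - 1`, the sum `Ψ_K(g)` factors over the columns of `v`: column `c` ranges over a
subspace `W_c` (`lowerKer u c`) and contributes `∑_{x ∈ W_c} θ((u x)_c)`, which is `|W_c|` if the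
form `x ↦ (u x)_c` vanishes on `W_c` (`c ∈ A := nullCols u`) and `0` otherwise. Splitting off
row `c + 1` gives `|W_c| = q ^ #{c' ∈ A | c < c'}`, so `Ψ^t(g)` is the `t`-th elementary symmetric
function of `1, q, …, q^(a-1)` with `a = |A|`, that is `q^(t(t-1)/2) [a choose t]_q`. The theorem
becomes an identity of Gaussian binomials: by trinomial revision each summand on the right is
`[a choose k]_q` times a term of the `q`-Vandermonde convolution for `[a choose j]_q`, and that
convolution is read off from `(-T; q)_(k+b) = (-T; q)_k (-q^k T; q)_b`.
-/

open Matrix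

@[simp] lemma gaussBinom_zero_right (n : ℕ) : gaussBinom n 0 = 1 := by
  cases n <;> rfl

@[simp] lemma gaussBinom_zero_succ (k : ℕ) : gaussBinom 0 (k + 1) = 0 := rfl

lemma gaussBinom_succ_succ (n k : ℕ) :
    gaussBinom (n + 1) (k + 1) = gaussBinom n k + X ^ (k + 1) * gaussBinom n (k + 1) := rfl

lemma gaussBinom_eq_zero_of_lt {n k : ℕ} (h : n < k) : gaussBinom n k = 0 := by
  induction n generalizing k with
  | zero => obtain ⟨k, rfl⟩ := Nat.exists_eq_succ_of_ne_zero h.ne'; rfl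
  | succ n ih =>
    obtain ⟨k, rfl⟩ := Nat.exists_eq_succ_of_ne_zero (n.succ_pos.trans h).ne'
    rw [gaussBinom_succ_succ, ih (by omega), ih (by omega), mul_zero, add_zero]

@[simp] lemma gaussBinom_self (n : ℕ) : gaussBinom n n = 1 := by
  induction n with
  | zero => rfl
  | succ n ih => rw [gaussBinom_succ_succ, ih, gaussBinom_eq_zero_of_lt n.lt_succ_self]; ring

noncomputable def qFactorial (n : ℕ) : ℤ[X] := ∏ i ∈ range n, ∑ j ∈ range (i + 1), X ^ j

lemma qFactorial_succ (n : ℕ) :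
    qFactorial (n + 1) = qFactorial n * ∑ j ∈ range (n + 1), X ^ j :=
  prod_range_succ _ _

lemma qFactorial_ne_zero (n : ℕ) : qFactorial n ≠ 0 := by
  refine prod_ne_zero_iff.mpr fun i _ h => ?_
  have := congrArg (eval 1) h
  simp only [eval_geom_sum, one_pow, sum_const, card_range, Int.nsmul_eq_mul, Nat.cast_add,
    Nat.cast_one, mul_one, eval_zero] at this
  omega

lemma gaussBinom_add_mul_qFactorial (m n : ℕ) :
    gaussBinom (m + n) m * qFactorial m * qFactorial n = qFactorial (m + n) := by
  induction m generalizing n with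
  | zero => simp [qFactorial]
  | succ m ihm =>
    induction n with
    | zero => simp [qFactorial]
    | succ n ihn =>
      have hgeom : ∑ j ∈ range (m + 1), X ^ j + X ^ (m + 1) * ∑ j ∈ range (n + 1), X ^ j
          = ∑ j ∈ range (m + (n + 1) + 1), (X : ℤ[X]) ^ j := by
        rw [show m + (n + 1) + 1 = (m + 1) + (n + 1) by omega,
          sum_range_add (fun j => (X : ℤ[X]) ^ j) (m + 1) (n + 1), mul_sum]
        simp only [pow_add]
      have ihm' := ihm (n + 1)
      rw [show m + 1 + n = m + (n + 1) by omega] at ihn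
      rw [show m + 1 + (n + 1) = m + (n + 1) + 1 by omega, gaussBinom_succ_succ,
        qFactorial_succ (m + (n + 1))]
      rw [qFactorial_succ m] at ihn ⊢
      rw [qFactorial_succ n] at ihm' ⊢
      linear_combination (∑ j ∈ range (m + 1), (X : ℤ[X]) ^ j) * ihm'
        + (X ^ (m + 1) * ∑ j ∈ range (n + 1), (X : ℤ[X]) ^ j) * ihn
        + qFactorial (m + (n + 1)) * hgeom

lemma gaussBinom_mul_qFactorial {n k : ℕ} (h : k ≤ n) :
    gaussBinom n k * qFactorial k * qFactorial (n - k) = qFactorial n := by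
  obtain ⟨d, rfl⟩ := Nat.exists_eq_add_of_le h
  rw [Nat.add_sub_cancel_left, gaussBinom_add_mul_qFactorial]

lemma gaussBinom_mul_gaussBinom_mul_gaussBinom {a j k m : ℕ} (hmj : m ≤ j) (hjk : j ≤ k) :
    gaussBinom a (k + m) * gaussBinom (k + m) (k + m - j) * gaussBinom j m
      = gaussBinom a k * gaussBinom (a - k) m * gaussBinom k (j - m) := by
  by_cases ha : k + m ≤ a
  -- both sides times `[a-k-m]! [k+m-j]! [j-m]! [m]!` equal `[a]!`
  · have h1 := gaussBinom_mul_qFactorial ha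
    have h2 := gaussBinom_mul_qFactorial (show k + m - j ≤ k + m by omega)
    have h3 := gaussBinom_mul_qFactorial hmj
    have h4 := gaussBinom_mul_qFactorial (show k ≤ a by omega)
    have h5 := gaussBinom_mul_qFactorial (show m ≤ a - k by omega)
    have h6 := gaussBinom_mul_qFactorial (show j - m ≤ k by omega)
    rw [show k + m - (k + m - j) = j by omega] at h2
    rw [show a - k - m = a - (k + m) by omega] at h5
    rw [show k - (j - m) = k + m - j by omega] at h6
    refine mul_right_cancel₀ (mul_ne_zero (mul_ne_zero (mul_ne_zero
      (qFactorial_ne_zero (a - (k + m))) (qFactorial_ne_zero (k + m - j)))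
      (qFactorial_ne_zero (j - m))) (qFactorial_ne_zero m)) ?_
    linear_combination
      (gaussBinom a (k + m) * gaussBinom (k + m) (k + m - j) * qFactorial (a - (k + m))
        * qFactorial (k + m - j)) * h3
      + (gaussBinom a (k + m) * qFactorial (a - (k + m))) * h2 + h1
      - (gaussBinom a k * gaussBinom k (j - m) * qFactorial (j - m) * qFactorial (k + m - j)) * h5
      - (gaussBinom a k * qFactorial (a - k)) * h6 - h4
  · rw [gaussBinom_eq_zero_of_lt (by omega : a < k + m)]
    rcases lt_or_ge a k with hak | hak
    · rw [gaussBinom_eq_zero_of_lt hak]; ring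
    · rw [gaussBinom_eq_zero_of_lt (by omega : a - k < m)]; ring

lemma Nat.add_choose_two (k m : ℕ) : (k + m).choose 2 = k.choose 2 + k * m + m.choose 2 := by
  induction m with
  | zero => simp
  | succ m ih =>
    rw [← add_assoc, Nat.choose_succ_succ', ih, Nat.choose_succ_succ', Nat.choose_one_right,
      Nat.choose_one_right]
    ring

/-- The `q`-Pochhammer symbol `(-T; q)_a = ∏_{i<a} (1 + q^i T)`; the outer variable is `T`, the
inner one `q`. -/
noncomputable def qPochhammer (a : ℕ) : ℤ[X][X] := ∏ i ∈ range a, (1 + C (X ^ i) * X)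

lemma qPochhammer_add (k b : ℕ) :
    qPochhammer (k + b) = qPochhammer k * (qPochhammer b).comp (C (X ^ k) * X) := by
  rw [qPochhammer, qPochhammer, qPochhammer, prod_range_add, Polynomial.prod_comp]
  refine congrArg _ (prod_congr rfl fun i _ => ?_)
  simp only [add_comp, one_comp, mul_comp, C_comp, X_comp, pow_add, C_mul]
  ring

lemma coeff_qPochhammer (a t : ℕ) : (qPochhammer a).coeff t = X ^ t.choose 2 * gaussBinom a t := by
  induction a generalizing t with
  | zero => cases t <;> simp [qPochhammer, coeff_one]
  | succ a ih =>
    have hsucc : qPochhammer (a + 1) = (1 + X) * (qPochhammer a).comp (C X * X) := by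
      rw [add_comm, qPochhammer_add, pow_one]
      simp [qPochhammer]
    rw [hsucc]
    cases t with
    | zero => simp [ih]
    | succ t =>
      rw [add_mul, one_mul, coeff_add, coeff_X_mul, comp_C_mul_X_coeff, comp_C_mul_X_coeff, ih, ih,
        gaussBinom_succ_succ, Nat.choose_succ_succ', Nat.choose_one_right, pow_add]
      ring

lemma gaussBinom_vandermonde (k b j : ℕ) :
    X ^ j.choose 2 * gaussBinom (k + b) j
      = ∑ m ∈ range (j + 1), X ^ (k * m + m.choose 2) * gaussBinom b m
          * (X ^ (j - m).choose 2 * gaussBinom k (j - m)) := by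
  rw [← coeff_qPochhammer, qPochhammer_add, mul_comm, coeff_mul,
    Nat.sum_antidiagonal_eq_sum_range_succ
      (fun i l => ((qPochhammer b).comp (C (X ^ k) * X)).coeff i * (qPochhammer k).coeff l)]
  refine sum_congr rfl fun m _ => ?_
  rw [comp_C_mul_X_coeff, coeff_qPochhammer, coeff_qPochhammer]
  ring

lemma gaussBinom_mul_gaussBinom_eq_sum (a : ℕ) {j k : ℕ} (hjk : j ≤ k) :
    X ^ j.choose 2 * gaussBinom a j * (X ^ k.choose 2 * gaussBinom a k)
      = ∑ m ∈ range (j + 1), X ^ (j - m).choose 2 * gaussBinom (k + m) (k + m - j)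
          * gaussBinom j m * (X ^ (k + m).choose 2 * gaussBinom a (k + m)) := by
  rcases lt_or_ge a k with hak | hak
  · rw [gaussBinom_eq_zero_of_lt hak, mul_zero, mul_zero, eq_comm]
    exact sum_eq_zero fun m _ => by simp [gaussBinom_eq_zero_of_lt (show a < k + m by omega)]
  obtain ⟨b, rfl⟩ := Nat.exists_eq_add_of_le hak
  rw [gaussBinom_vandermonde, sum_mul]
  refine sum_congr rfl fun m hm => ?_
  have hmj : m ≤ j := Nat.lt_succ_iff.mp (mem_range.mp hm)
  have htri := gaussBinom_mul_gaussBinom_mul_gaussBinom (a := k + b) hmj hjk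
  rw [Nat.add_sub_cancel_left] at htri
  rw [Nat.add_choose_two, pow_add, pow_add]
  linear_combination -(X ^ (j - m).choose 2 * X ^ k.choose 2 * X ^ (k * m) * X ^ m.choose 2) * htri

lemma sum_powersetCard_prod_X_pow_card_gt {α : Type*} [LinearOrder α] (A : Finset α) (t : ℕ) :
    ∑ K ∈ A.powersetCard t, ∏ c ∈ K, (X : ℤ[X]) ^ #{x ∈ A | c < x}
      = X ^ t.choose 2 * gaussBinom #A t := by
  -- removing the largest element lowers every other weight by one: the recursion of `gaussBinom`
  induction A using Finset.induction_on_max generalizing t with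
  | empty => cases t <;> simp
  | insert a s ha ih =>
    have has : a ∉ s := fun h => lt_irrefl a (ha a h)
    cases t with
    | zero => simp
    | succ t =>
      have hshift : ∀ K ⊆ s, ∏ c ∈ K, (X : ℤ[X]) ^ #{x ∈ insert a s | c < x}
          = X ^ #K * ∏ c ∈ K, X ^ #{x ∈ s | c < x} := fun K hKs => by
        rw [prod_congr rfl fun c hc => by
          rw [filter_insert, if_pos (ha c (hKs hc)), card_insert_of_notMem (by simp [has])]]
        simp only [pow_succ, prod_mul_distrib, prod_const]
        ring
      have htop : #{x ∈ insert a s | a < x} = 0 := by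
        simp only [card_eq_zero, filter_eq_empty_iff, mem_insert]
        rintro x (rfl | hx)
        · exact lt_irrefl x
        · exact (ha x hx).not_gt
      rw [powersetCard_succ_insert has, sum_union, sum_image, card_insert_of_notMem has,
        gaussBinom_succ_succ]
      · have hlow : ∑ K ∈ s.powersetCard (t + 1), ∏ c ∈ K, (X : ℤ[X]) ^ #{x ∈ insert a s | c < x}
            = X ^ (t + 1) * (X ^ (t + 1).choose 2 * gaussBinom #s (t + 1)) := by
          rw [← ih, mul_sum]
          refine sum_congr rfl fun K hK => ?_
          rw [hshift K (mem_powersetCard.mp hK).1, (mem_powersetCard.mp hK).2]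
        have hup : ∑ K ∈ s.powersetCard t, ∏ c ∈ insert a K, (X : ℤ[X]) ^ #{x ∈ insert a s | c < x}
            = X ^ t * (X ^ t.choose 2 * gaussBinom #s t) := by
          rw [← ih, mul_sum]
          refine sum_congr rfl fun K hK => ?_
          rw [prod_insert fun h => has ((mem_powersetCard.mp hK).1 h), htop, pow_zero, one_mul,
            hshift K (mem_powersetCard.mp hK).1, (mem_powersetCard.mp hK).2]
        rw [hlow, hup, Nat.choose_succ_succ', Nat.choose_one_right]
        ring
      · intro K hK L hL hKL
        rw [← erase_insert (fun h => has ((mem_powersetCard.mp hK).1 h)),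
          ← erase_insert (fun h => has ((mem_powersetCard.mp hL).1 h))]
        exact congrArg (·.erase a) hKL
      · refine disjoint_left.mpr fun K hK hK' => ?_
        obtain ⟨L, -, rfl⟩ := mem_image.mp hK'
        exact has ((mem_powersetCard.mp hK).1 (mem_insert_self a L))

lemma sum_powersetCard_prod_ite_mem {ι M : Type*} [Fintype ι] [DecidableEq ι] [CommSemiring M]
    (A : Finset ι) (f : ι → M) (t : ℕ) :
    ∑ K ∈ univ.powersetCard t, ∏ c ∈ K, (if c ∈ A then f c else 0)
      = ∑ K ∈ A.powersetCard t, ∏ c ∈ K, f c := by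
  rw [← sum_subset (powersetCard_mono (subset_univ A)) fun K hK hKA => ?_]
  · refine sum_congr rfl fun K hK => prod_congr rfl fun c hc => ?_
    rw [if_pos ((mem_powersetCard.mp hK).1 hc)]
  · obtain ⟨c, hcK, hcA⟩ := not_subset.mp fun hsub =>
      hKA (mem_powersetCard.mpr ⟨hsub, (mem_powersetCard.mp hK).2⟩)
    exact prod_eq_zero hcK (if_neg hcA)

lemma AddChar.map_sum_eq_prod {A M ι : Type*} [AddCommMonoid A] [CommMonoid M] (ψ : AddChar A M)
    (s : Finset ι) (f : ι → A) : ψ (∑ i ∈ s, f i) = ∏ i ∈ s, ψ (f i) := by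
  induction s using Finset.cons_induction with
  | empty => simp
  | cons a s ha ih => rw [sum_cons, prod_cons, AddChar.map_add_eq_mul, ih]

lemma LinearMap.map_div_smul_self {K V : Type*} [Field K] [AddCommGroup V] [Module K V]
    {φ : V →ₗ[K] K} {v : V} (hv : φ v ≠ 0) (s : K) : φ ((s / φ v) • v) = s := by
  rw [map_smul, smul_eq_mul, div_mul_cancel₀ s hv]

lemma sum_addChar_comp_linearMap {K V : Type*} [Field K] [AddCommGroup V] [Module K V] [Fintype V]
    {ψ : AddChar K ℂ} (hψ : ψ ≠ 0) (φ : V →ₗ[K] K) [Decidable (φ = 0)] :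
    ∑ v, ψ (φ v) = if φ = 0 then (Fintype.card V : ℂ) else 0 := by
  split_ifs with hφ
  · simp [hφ]
  obtain ⟨v, hv⟩ : ∃ v, φ v ≠ 0 := by
    by_contra! h
    exact hφ (LinearMap.ext h)
  obtain ⟨s, hs⟩ := AddChar.ne_zero_iff.mp hψ
  refine eq_zero_of_mul_eq_self_left hs ?_
  rw [mul_sum]
  refine Fintype.sum_equiv (Equiv.addRight ((s / φ v) • v)) _ _ fun x => ?_
  rw [Equiv.coe_addRight, map_add, LinearMap.map_div_smul_self hv, AddChar.map_add_eq_mul,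
    mul_comm]

lemma Submodule.card_inf_ker_mul_card {K V : Type*} [Field K] [AddCommGroup V] [Module K V]
    (W : Submodule K V) {φ : V →ₗ[K] K} {v : V} (hvW : v ∈ W) (hv : φ v ≠ 0) :
    Nat.card ↥(W ⊓ LinearMap.ker φ) * Nat.card K = Nat.card W := by
  have hsurj : Function.Surjective (φ.domRestrict W) := fun s =>
    ⟨(s / φ v) • ⟨v, hvW⟩, LinearMap.map_div_smul_self hv s⟩
  rw [Submodule.card_eq_card_quotient_mul_card (LinearMap.ker (φ.domRestrict W)),
    Nat.card_congr ((φ.domRestrict W).quotKerEquivOfSurjective hsurj).toEquiv]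
  congr 1
  exact (Nat.card_congr (Equiv.subtypeSubtypeEquivSubtypeInter (· ∈ W) (φ · = 0))).symm

section LowerKer

variable {R : Type*} [CommRing R] {n : ℕ} (u : Matrix (Fin n) (Fin n) R)

/-- With `u = g - 1`, the possible columns `c` of the matrices `v` in `Psi`: `lower(g v) = v`
says that `v` vanishes on and above the diagonal and `u v` strictly below it. -/
def lowerKer (c : ℕ) : Submodule R (Fin n → R) where
  carrier := {x | (∀ i : Fin n, (i : ℕ) ≤ c → x i = 0) ∧ ∀ i : Fin n, c < i → (u *ᵥ x) i = 0}
  add_mem' := by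
    rintro x y ⟨hx, hux⟩ ⟨hy, huy⟩
    exact ⟨fun i hi => by simp [hx i hi, hy i hi], fun i hi => by
      simp [Matrix.mulVec_add, hux i hi, huy i hi]⟩
  zero_mem' := by simp
  smul_mem' := by
    rintro a x ⟨hx, hux⟩
    exact ⟨fun i hi => by simp [hx i hi], fun i hi => by simp [Matrix.mulVec_smul, hux i hi]⟩

def rowForm (i : Fin n) : (Fin n → R) →ₗ[R] R := LinearMap.proj i ∘ₗ u.mulVecLin

@[simp] lemma rowForm_apply (i : Fin n) (x : Fin n → R) : rowForm u i x = (u *ᵥ x) i := rfl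

open Classical in
noncomputable def nullCols : Finset (Fin n) := {c | ∀ x ∈ lowerKer u c, (u *ᵥ x) c = 0}

variable {u}

lemma mem_lowerKer {c : ℕ} {x : Fin n → R} :
    x ∈ lowerKer u c ↔ (∀ i : Fin n, (i : ℕ) ≤ c → x i = 0) ∧ ∀ i : Fin n, c < i → (u *ᵥ x) i = 0 :=
  Iff.rfl

lemma lowerKer_eq_bot {c : ℕ} (h : n ≤ c + 1) : lowerKer u c = ⊥ :=
  eq_bot_iff.mpr fun x hx => _root_.funext fun i => hx.1 i (by omega)

lemma lowerKer_inf_ker_proj {c : ℕ} {i : Fin n} (hi : (i : ℕ) = c + 1) :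
    lowerKer u c ⊓ LinearMap.ker (LinearMap.proj i)
      = lowerKer u (c + 1) ⊓ LinearMap.ker (rowForm u i) := by
  ext x
  simp only [Submodule.mem_inf, mem_lowerKer, LinearMap.mem_ker, LinearMap.proj_apply,
    rowForm_apply]
  constructor
  · rintro ⟨⟨hx, hux⟩, hxi⟩
    refine ⟨⟨fun j hj => ?_, fun j hj => hux j (by omega)⟩, hux i (by omega)⟩
    rcases Nat.lt_or_eq_of_le hj with hj | hj
    · exact hx j (by omega)
    · rwa [Fin.ext (hj.trans hi.symm)]
  · rintro ⟨⟨hx, hux⟩, huxi⟩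
    refine ⟨⟨fun j hj => hx j (by omega), fun j hj => ?_⟩, hx i hi.le⟩
    rcases Nat.lt_or_eq_of_le (Nat.succ_le_of_lt hj) with hj | hj
    · exact hux j hj
    · rwa [← Fin.ext (hi.trans hj)]

lemma single_mem_lowerKer (hu : ∀ a b : Fin n, ¬ a < b → u a b = 0) {c : ℕ} {i : Fin n}
    (hi : (i : ℕ) = c + 1) : Pi.single i 1 ∈ lowerKer u c := by
  refine ⟨fun j hj => Pi.single_eq_of_ne (fun hji => by subst hji; omega) 1,
    fun j hj => ?_⟩
  rw [Matrix.mulVec_single_one]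
  exact hu j i (by rw [Fin.lt_def]; omega)

end LowerKer

section Count

variable {K : Type*} [Field K] {n : ℕ} {u : Matrix (Fin n) (Fin n) K}

lemma card_lowerKer (hu : ∀ a b : Fin n, ¬ a < b → u a b = 0) (c : ℕ) :
    Nat.card (lowerKer u c) = Nat.card K ^ #{x ∈ nullCols u | c < x.val} := by
  induction h : n - (c + 1) generalizing c with
  | zero =>
    rw [lowerKer_eq_bot (by omega), Nat.card_unique,
      filter_false_of_mem fun x _ => by have := x.isLt; omega, card_empty, pow_zero]
  | succ d ih =>
    obtain ⟨i, hi⟩ : ∃ i : Fin n, (i : ℕ) = c + 1 := ⟨⟨c + 1, by omega⟩, rfl⟩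
    have hsplit := (lowerKer u c).card_inf_ker_mul_card (φ := LinearMap.proj i)
      (single_mem_lowerKer hu hi) (by simp)
    rw [lowerKer_inf_ker_proj hi] at hsplit
    by_cases hnull : i ∈ nullCols u
    · have hall : ∀ x ∈ lowerKer u (c + 1), (u *ᵥ x) i = 0 := by
        classical exact hi ▸ (mem_filter.mp hnull).2
      have hcols : {x ∈ nullCols u | c < x.val} = insert i {x ∈ nullCols u | c + 1 < x.val} := by
        ext x
        simp only [mem_filter, mem_insert, Fin.ext_iff, hi]
        constructor
        · rintro ⟨hx, hcx⟩
          exact (eq_or_lt_of_le (hcx : c + 1 ≤ x)).imp Eq.symm fun h => ⟨hx, h⟩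
        · rintro (hxi | ⟨hx, hcx⟩)
          · exact ⟨Fin.ext (hxi.trans hi.symm) ▸ hnull, by omega⟩
          · exact ⟨hx, by omega⟩
      rw [inf_eq_left.mpr fun x hx => hall x hx] at hsplit
      rw [← hsplit, ih (c + 1) (by omega), hcols, card_insert_of_notMem (by simp [hi]), pow_succ]
    · obtain ⟨x, hx, hux⟩ : ∃ x ∈ lowerKer u (c + 1), (u *ᵥ x) i ≠ 0 := by
        by_contra! hall
        classical exact hnull (mem_filter.mpr ⟨mem_univ _, hi ▸ hall⟩)
      have hcols : {x ∈ nullCols u | c < x.val} = {x ∈ nullCols u | c + 1 < x.val} :=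
        filter_congr fun x hx => ⟨fun hcx => (Nat.lt_or_eq_of_le hcx).resolve_right
          fun h => hnull (Fin.ext (hi.trans h) ▸ hx), by omega⟩
      rw [hcols, ← ih (c + 1) (by omega),
        ← (lowerKer u (c + 1)).card_inf_ker_mul_card (φ := rowForm u i) hx hux]
      exact hsplit.symm

end Count

section Psi

open scoped Classical

variable {n : ℕ}

lemma psi_support_iff_cols_mem {k : Type*} [Field k] (g v : Matrix (Fin n) (Fin n) k)
    (K : Finset (Fin n)) :
    ((∀ i j, ¬ j < i → v i j = 0) ∧ (∀ i j, v i j ≠ 0 → j ∈ K) ∧ lowerPart (g * v) = v)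
      ↔ ∀ c, vᵀ c ∈ (if c ∈ K then lowerKer (g - 1) c else ⊥) := by
  have hgv : g * v = (g - 1) * v + v := by rw [sub_mul, one_mul, sub_add_cancel]
  have hlow : lowerPart (g * v) = v
      ↔ ∀ i c, (c < i → ((g - 1) *ᵥ vᵀ c) i = 0) ∧ (¬ c < i → v i c = 0) := by
    rw [← Matrix.ext_iff]
    refine forall₂_congr fun i c => ?_
    simp only [lowerPart, Matrix.of_apply, hgv, Matrix.add_apply]
    split_ifs with h
    · simp only [h, not_true_eq_false, IsEmpty.forall_iff, and_true, forall_const, add_eq_right]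
      rfl
    · simp [h, eq_comm]
  rw [hlow]
  constructor
  · rintro ⟨hup, hK, hlow⟩ c
    split_ifs with hc
    · exact ⟨fun i hi => hup i c (by rw [Fin.lt_def]; omega), fun i hi => (hlow i c).1 hi⟩
    · exact (Submodule.mem_bot k).mpr (_root_.funext fun i => by_contra fun h => hc (hK i c h))
  · intro h
    have hcolK : ∀ c ∈ K, vᵀ c ∈ lowerKer (g - 1) c := fun c hc => by simpa [hc] using h c
    have hcol0 : ∀ c ∉ K, vᵀ c = 0 := fun c hc => by simpa [hc] using h c
    have hup : ∀ i c, ¬ c < i → v i c = 0 := fun i c hic => by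
      by_cases hc : c ∈ K
      · exact (hcolK c hc).1 i (by rw [Fin.lt_def] at hic; omega)
      · exact congrFun (hcol0 c hc) i
    refine ⟨hup, fun i c hv => by_contra fun hc => hv (congrFun (hcol0 c hc) i),
      fun i c => ⟨fun hic => ?_, hup i c⟩⟩
    by_cases hc : c ∈ K
    · exact (hcolK c hc).2 i hic
    · rw [hcol0 c hc, mulVec_zero, Pi.zero_apply]

lemma Psi_eq_prod (ψ : AddChar F ℂ) (g : Matrix (Fin n) (Fin n) F) (K : Finset (Fin n)) :
    Psi ψ K g = ∏ c ∈ K, ∑ x : lowerKer (g - 1) c, ψ (rowForm (g - 1) c x) := by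
  let S : Fin n → Submodule F (Fin n → F) := fun c => if c ∈ K then lowerKer (g - 1) c else ⊥
  have hcol : ∀ c, ∑ x ∈ univ.filter (· ∈ S c), ψ (rowForm (g - 1) c x)
      = if c ∈ K then ∑ x : lowerKer (g - 1) c, ψ (rowForm (g - 1) c x) else 1 := fun c => by
    by_cases hc : c ∈ K
    · simp only [S, if_pos hc]
      exact sum_subtype _ (by simp) _
    · simp [S, hc, filter_eq']
  rw [← Fintype.prod_ite_mem, ← prod_congr rfl fun c _ => hcol c, prod_univ_sum, Psi]
  refine sum_nbij' transpose transpose (fun v hv => ?_) (fun p hp => ?_)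
    (fun v _ => transpose_transpose v) (fun p _ => transpose_transpose p) (fun v _ => ?_)
  · have hcols := (psi_support_iff_cols_mem g v K).mp (mem_filter.mp hv).2
    exact Fintype.mem_piFinset.mpr fun c => mem_filter.mpr ⟨mem_univ _, hcols c⟩
  · refine mem_filter.mpr ⟨mem_univ _, (psi_support_iff_cols_mem g _ K).mpr fun c => ?_⟩
    exact (mem_filter.mp (Fintype.mem_piFinset.mp hp c)).2
  · exact AddChar.map_sum_eq_prod ψ univ _

lemma sum_lowerKer_addChar {ψ : AddChar F ℂ} (hψ : ψ ≠ 0) {u : Matrix (Fin n) (Fin n) F}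
    (hu : ∀ a b : Fin n, ¬ a < b → u a b = 0) (c : Fin n) :
    ∑ x : lowerKer u c, ψ (rowForm u c x)
      = if c ∈ nullCols u then (Fintype.card F : ℂ) ^ #{x ∈ nullCols u | c < x} else 0 := by
  have hzero : (rowForm u c).domRestrict (lowerKer u c) = 0 ↔ c ∈ nullCols u := by
    simp [nullCols, LinearMap.ext_iff]
  have hcols : {x ∈ nullCols u | c < x} = {x ∈ nullCols u | (c : ℕ) < x.val} :=
    filter_congr fun x _ => Fin.lt_def
  have h := sum_addChar_comp_linearMap hψ ((rowForm u c).domRestrict (lowerKer u c))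
  simp only [LinearMap.domRestrict_apply, hzero] at h
  rw [h, ← Nat.card_eq_fintype_card, card_lowerKer hu, hcols, Nat.card_eq_fintype_card]
  push_cast
  rfl

lemma Psik_eq {ψ : AddChar F ℂ} (hψ : ψ ≠ 0) {g : Matrix (Fin n) (Fin n) F}
    (hg : ∀ a b : Fin n, ¬ a < b → (g - 1) a b = 0) (t : ℕ) :
    Psik ψ t g = (Fintype.card F : ℂ) ^ t.choose 2
      * (((gaussBinom #(nullCols (g - 1)) t).eval (Fintype.card F : ℤ) : ℤ) : ℂ) := by
  have h := congrArg (fun p : ℤ[X] => ((p.eval (Fintype.card F : ℤ) : ℤ) : ℂ))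
    (sum_powersetCard_prod_X_pow_card_gt (nullCols (g - 1)) t)
  simp only [eval_finsetSum, eval_prod, eval_pow, eval_X, eval_mul, Int.cast_sum, Int.cast_prod,
    Int.cast_pow, Int.cast_mul, Int.cast_natCast] at h
  rw [← h, Psik]
  simp only [Psi_eq_prod, sum_lowerKer_addChar hψ hg]
  exact sum_powersetCard_prod_ite_mem _ _ t

end Psi

lemma Psik_eq_zero {n : ℕ} {θ : F → ℂ} (hθadd : ∀ x y, θ (x + y) = θ x * θ y) (hθ0 : θ 0 ≠ 1)
    (t : ℕ) (g : Matrix (Fin n) (Fin n) F) : Psik θ t g = 0 := by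
  have h0 : θ 0 = 0 := by
    have h00 := hθadd 0 0
    rw [add_zero] at h00
    exact (mul_eq_zero.mp (by linear_combination -h00 : θ 0 * (θ 0 - 1) = 0)).resolve_right
      (sub_ne_zero.mpr hθ0)
  have hθ : ∀ x, θ x = 0 := fun x => by rw [← add_zero x, hθadd, h0, mul_zero]
  exact sum_eq_zero fun K _ => sum_eq_zero fun v _ => hθ _

theorem stmt11 (n : ℕ) (θ : F → ℂ) (hθadd : ∀ x y, θ (x + y) = θ x * θ y)
    (hθne : ∃ x, θ x ≠ 1) (j k : ℕ) (hjk : j ≤ k)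
    (g : Matrix (Fin n) (Fin n) F) (hg : ∀ a b : Fin n, ¬ a < b → (g - 1) a b = 0) :
    Psik θ j g * Psik θ k g =
      ∑ m ∈ Finset.range (j + 1),
        (Fintype.card F : ℂ) ^ ((j - m) * (j - m - 1) / 2) *
          (((gaussBinom (k + m) (k + m - j)).eval (Fintype.card F : ℤ) : ℤ) : ℂ) *
          (((gaussBinom j m).eval (Fintype.card F : ℤ) : ℤ) : ℂ) *
          Psik θ (k + m) g := by
  by_cases hθ0 : θ 0 = 1
  · obtain ⟨ψ, rfl⟩ : ∃ ψ : AddChar F ℂ, ⇑ψ = θ := ⟨⟨θ, hθ0, hθadd⟩, rfl⟩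
    have hψ : ψ ≠ 0 := AddChar.ne_zero_iff.mpr hθne
    have key := congrArg (fun p : ℤ[X] => ((p.eval (Fintype.card F : ℤ) : ℤ) : ℂ))
      (gaussBinom_mul_gaussBinom_eq_sum #(nullCols (g - 1)) hjk)
    simp only [eval_finsetSum, eval_pow, eval_X, eval_mul, Int.cast_sum, Int.cast_pow, Int.cast_mul,
      Int.cast_natCast] at key
    simp only [Psik_eq hψ hg, ← Nat.choose_two_right]
    exact key
  · simp [Psik_eq_zero hθadd hθ0]
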